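/- arXiv:1911.09775 — 3 statements merged into one kernel-verified Lean document; each statement's English description precedes it below -/
import Mathlib

section
/- Sampling-based over-approximation of the first-order sensitivity (Theorem 5): let x̲ ≤ x̄ in ℝⁿ, let S : [x̲,x̄] → ℝ^{n×n} be continuously differentiable on the box [x̲,x̄] with differential DS(x) ∈ ℝ^{n×n²} satisfying Sxx̲ ≤ DS(x) ≤ Sxx̄ entrywise for all x ∈ [x̲,x̄]. Let Y ⊆ [x̲,x̄] be a nonempty finite set with dispersion d(Y) = sup_{x∈[x̲,x̄]} min_{y∈Y} ‖x−y‖_∞, and define M ∈ ℝ^{n×n} by M_{ij} = Σ_{k=1}^{n} max(|Sxx̲|,|Sxx̄|)_{i,(j−1)n+k} · d(Y). Then for every x ∈ [x̲,x̄] and all i, j ∈ {1,…,n}: min_{y∈Y} S_{ij}(y) − M_{ij} ≤ S_{ij}(x) ≤ max_{y∈Y} S_{ij}(y) + M_{ij}. -/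
/-- The dispersion `d(Y) = sup_{x∈[x̲,x̄]} min_{y∈Y} ‖x−y‖_∞` of a finite set of samples
`Y` in the box `[x̲,x̄]` (the norm on `Fin n → ℝ` is the sup norm `‖·‖_∞`). -/
noncomputable def dispersion {n : ℕ} (xl xu : Fin n → ℝ) (Y : Finset (Fin n → ℝ)) : ℝ :=
  sSup ((fun x => sInf ((fun y => ‖x - y‖) '' (Y : Set (Fin n → ℝ)))) '' Set.Icc xl xu)

/-- **Sampling-based over-approximation of the first-order sensitivity** (Theorem 5).
Let `S : [x̲,x̄] → ℝ^{n×n}` be continuously differentiable on the box with differential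
`DS(x) ∈ ℝ^{n×n²}` (block convention: entry `(i,(j,k))` is `DS x i j (Pi.single k 1)`)
satisfying `Sxx̲ ≤ DS(x) ≤ Sxx̄` entrywise on the box. Let `Y ⊆ [x̲,x̄]` be a nonempty
finite set of samples and `M_{ij} = Σ_k max(|Sxx̲|,|Sxx̄|)_{i,(j,k)} · d(Y)`. Then for every
`x` in the box: `min_{y∈Y} S_{ij}(y) − M_{ij} ≤ S_{ij}(x) ≤ max_{y∈Y} S_{ij}(y) + M_{ij}`. -/
theorem sampled_sensitivity_overapproximation {n : ℕ}
    (xl xu : Fin n → ℝ) (hx : xl ≤ xu)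
    (S : (Fin n → ℝ) → Matrix (Fin n) (Fin n) ℝ)
    (DS : (Fin n → ℝ) → Fin n → Fin n → ((Fin n → ℝ) →L[ℝ] ℝ))
    (Sxxl Sxxu : Fin n → Fin n → Fin n → ℝ)
    (hDS : ∀ x ∈ Set.Icc xl xu, ∀ i j,
      HasFDerivWithinAt (fun z => S z i j) (DS x i j) (Set.Icc xl xu) x)
    (hDScont : ∀ i j, ContinuousOn (fun x => DS x i j) (Set.Icc xl xu))
    (hbound : ∀ x ∈ Set.Icc xl xu, ∀ i j k,
      Sxxl i j k ≤ DS x i j (Pi.single k 1) ∧ DS x i j (Pi.single k 1) ≤ Sxxu i j k)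
    (Y : Finset (Fin n → ℝ)) (hY : Y.Nonempty) (hYsub : ↑Y ⊆ Set.Icc xl xu)
    (M : Fin n → Fin n → ℝ)
    (hM : ∀ i j, M i j = ∑ k : Fin n, max |Sxxl i j k| |Sxxu i j k| * dispersion xl xu Y) :
    ∀ x ∈ Set.Icc xl xu, ∀ i j,
      (Y.inf' hY fun y => S y i j) - M i j ≤ S x i j ∧
      S x i j ≤ (Y.sup' hY fun y => S y i j) + M i j := by
  intro x hxmem i j
  set C : ℝ := ∑ k : Fin n, max |Sxxl i j k| |Sxxu i j k| with hCdef
  have hC0 : 0 ≤ C :=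
    Finset.sum_nonneg fun k _ => le_max_of_le_left (abs_nonneg _)
  -- operator norm bound
  have hDnorm : ∀ z ∈ Set.Icc xl xu, ‖DS z i j‖ ≤ C := by
    intro z hz
    refine ContinuousLinearMap.opNorm_le_bound _ hC0 ?_
    intro v
    have hv : v = ∑ k : Fin n, v k • (Pi.single k 1 : Fin n → ℝ) := by
      ext m
      simp [Finset.sum_apply, Pi.single_apply]
    have hv2 : (DS z i j) v = ∑ k : Fin n, v k * (DS z i j) (Pi.single k 1) := by
      conv_lhs => rw [hv]
      rw [map_sum]
      refine Finset.sum_congr rfl fun k _ => ?_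
      rw [map_smul]; rfl
    rw [Real.norm_eq_abs, hv2]
    calc |∑ k : Fin n, v k * (DS z i j) (Pi.single k 1)|
        ≤ ∑ k : Fin n, |v k * (DS z i j) (Pi.single k 1)| :=
          Finset.abs_sum_le_sum_abs _ _
      _ ≤ ∑ k : Fin n, max |Sxxl i j k| |Sxxu i j k| * ‖v‖ := by
          refine Finset.sum_le_sum fun k _ => ?_
          rw [abs_mul, mul_comm]
          have h1 : |(DS z i j) (Pi.single k 1)| ≤ max |Sxxl i j k| |Sxxu i j k| :=
            abs_le_max_abs_abs (hbound z hz i j k).1 (hbound z hz i j k).2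
          have h2 : |v k| ≤ ‖v‖ := by
            simpa [Real.norm_eq_abs] using norm_le_pi_norm v k
          exact mul_le_mul h1 h2 (abs_nonneg _) (le_max_of_le_left (abs_nonneg _))
      _ = C * ‖v‖ := by rw [← Finset.sum_mul]
  have key : ∀ y ∈ Set.Icc xl xu, ‖S x i j - S y i j‖ ≤ C * ‖x - y‖ := fun y hy =>
    Convex.norm_image_sub_le_of_norm_hasFDerivWithin_le
      (fun z hz => hDS z hz i j) hDnorm (convex_Icc xl xu) hy hxmem
  -- nearest sample
  obtain ⟨y, hyY, hymin⟩ := Y.exists_min_image (fun y => ‖x - y‖) hY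
  have h1 : ‖x - y‖ ≤ sInf ((fun y => ‖x - y‖) '' (Y : Set (Fin n → ℝ))) := by
    refine le_csInf ((hY.to_set).image _) ?_
    rintro _ ⟨y', hy', rfl⟩
    exact hymin y' hy'
  have hbdd : BddAbove ((fun x => sInf ((fun y => ‖x - y‖) '' (Y : Set (Fin n → ℝ)))) ''
      Set.Icc xl xu) := by
    refine ⟨‖xu - xl‖, ?_⟩
    rintro _ ⟨z, hz, rfl⟩
    have hmem : ‖z - y‖ ∈ (fun y => ‖z - y‖) '' (Y : Set (Fin n → ℝ)) :=
      ⟨y, hyY, rfl⟩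
    refine le_trans (csInf_le ⟨0, ?_⟩ hmem) ?_
    · rintro _ ⟨y', _, rfl⟩; exact norm_nonneg _
    · have hyI := hYsub hyY
      refine pi_norm_le_iff_of_nonneg (norm_nonneg _) |>.mpr fun m => ?_
      have : |z m - y m| ≤ |xu m - xl m| := by
        have h1 := hz.1 m; have h2 := hz.2 m
        have h3 := hyI.1 m; have h4 := hyI.2 m
        have h5 := hx m
        simp only [Pi.sub_apply] at *
        rw [abs_le]; constructor <;> [skip; skip] <;>
          (rw [abs_of_nonneg (by linarith : (0:ℝ) ≤ xu m - xl m)]) <;> linarith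
      calc ‖(z - y) m‖ = |z m - y m| := rfl
        _ ≤ |xu m - xl m| := this
        _ ≤ ‖xu - xl‖ := by simpa [Real.norm_eq_abs] using norm_le_pi_norm (xu - xl) m
  have hxy : ‖x - y‖ ≤ dispersion xl xu Y :=
    h1.trans (le_csSup hbdd ⟨x, hxmem, rfl⟩)
  have hMle : |S x i j - S y i j| ≤ M i j := by
    rw [hM, ← Finset.sum_mul]
    calc |S x i j - S y i j| ≤ C * ‖x - y‖ := key y (hYsub hyY)
      _ ≤ C * dispersion xl xu Y := mul_le_mul_of_nonneg_left hxy hC0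
  have habs := abs_sub_le_iff.mp hMle
  have hinf : (Y.inf' hY fun y => S y i j) ≤ S y i j := Finset.inf'_le _ hyY
  have hsup : S y i j ≤ Y.sup' hY fun y => S y i j := Finset.le_sup' (fun y => S y i j) hyY
  constructor <;> linarith [habs.1, habs.2]
end

section
/- Arbitrary precision of the sampled sensitivity bounds (Proposition 6): let x̲ ≤ x̄ in ℝⁿ and let S : [x̲,x̄] → ℝ^{n×n} be continuously differentiable on the box with Sxx̲ ≤ DS(x) ≤ Sxx̄ entrywise for all x ∈ [x̲,x̄]. For each a ∈ ℕ, a ≥ 1, let Y_a be the uniform grid in [x̲,x̄] with a points per dimension (coordinates x̲_i + (2m+1)(x̄_i − x̲_i)/(2a), m ∈ {0,…,a−1}), and let M^{(a)}_{ij} = Σ_k max(|Sxx̲|,|Sxx̄|)_{i,(j−1)n+k} · d(Y_a). Then as a → ∞, for every i, j ∈ {1,…,n}: max_{y∈Y_a} S_{ij}(y) + M^{(a)}_{ij} → sup_{x∈[x̲,x̄]} S_{ij}(x) and min_{y∈Y_a} S_{ij}(y) − M^{(a)}_{ij} → inf_{x∈[x̲,x̄]} S_{ij}(x); that is, the over-approximating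 intervals of Theorem 5 converge to the unique tight interval over-approximation of the set {S(x) : x ∈ [x̲,x̄]}. -/
open Filter Topology

/-- The uniform grid in the box `[x̲,x̄] ⊆ ℝⁿ` with `a` points per dimension,
whose coordinates in dimension `i` are `x̲_i + (2m+1)(x̄_i − x̲_i)/(2a)`, `m ∈ {0,…,a−1}`. -/
noncomputable def uniformGrid {n : ℕ} (xl xu : Fin n → ℝ) (a : ℕ) : Finset (Fin n → ℝ) :=
  @Finset.image (Fin n → Fin a) (Fin n → ℝ) (Classical.decEq _)
    (fun m i => xl i + (2 * (m i : ℝ) + 1) * (xu i - xl i) / (2 * a))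
    Finset.univ

lemma uniformGrid_subset {n : ℕ} {xl xu : Fin n → ℝ} (hx : xl ≤ xu) (a : ℕ) :
    (uniformGrid xl xu a : Set (Fin n → ℝ)) ⊆ Set.Icc xl xu := by
  intro y hy
  simp only [uniformGrid, Finset.coe_image, Set.mem_image, Finset.mem_coe,
    Finset.mem_univ, Finset.coe_univ, Set.image_univ, Set.mem_range] at hy
  obtain ⟨m, rfl⟩ := hy
  constructor <;> intro i
  · have ha : 0 < (a : ℝ) := by exact_mod_cast (m i).pos
    have h1 : 0 ≤ (2 * ((m i : ℕ) : ℝ) + 1) * (xu i - xl i) / (2 * a) := by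
      apply div_nonneg (mul_nonneg (by positivity) (sub_nonneg.2 (hx i))) (by positivity)
    linarith [h1]
  · have ha : 0 < (a : ℝ) := by exact_mod_cast (m i).pos
    have hm : (2 * ((m i : ℕ) : ℝ) + 1) ≤ 2 * a := by
      have : ((m i : ℕ) : ℝ) + 1 ≤ a := by exact_mod_cast (m i).isLt
      linarith
    have h2 : (2 * ((m i : ℕ) : ℝ) + 1) * (xu i - xl i) / (2 * a) ≤ xu i - xl i := by
      rw [div_le_iff₀ (by positivity)]
      calc (2 * ((m i : ℕ) : ℝ) + 1) * (xu i - xl i) ≤ 2 * a * (xu i - xl i) :=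
        mul_le_mul_of_nonneg_right hm (sub_nonneg.2 (hx i))
      _ = (xu i - xl i) * (2 * a) := by ring
    linarith [h2]

lemma exists_grid_near {n : ℕ} {xl xu : Fin n → ℝ} (hx : xl ≤ xu) {a : ℕ} (ha : 1 ≤ a)
    {x : Fin n → ℝ} (hxm : x ∈ Set.Icc xl xu) :
    ∃ y ∈ uniformGrid xl xu a, ‖x - y‖ ≤ ‖xu - xl‖ / (2 * a) := by
  have hapos : 0 < (a : ℝ) := by exact_mod_cast ha
  set m : Fin n → Fin a := fun i =>
    ⟨min (a - 1) ⌊(x i - xl i) * a / (xu i - xl i)⌋₊, by omega⟩ with hm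
  refine ⟨fun i => xl i + (2 * ((m i : ℕ) : ℝ) + 1) * (xu i - xl i) / (2 * a),
    (@Finset.mem_image _ _ (Classical.decEq _) _ _ _).mpr ⟨m, Finset.mem_univ m, rfl⟩, ?_⟩
  rw [pi_norm_le_iff_of_nonneg (by positivity)]
  intro i
  set d := xu i - xl i with hd
  have hd0 : 0 ≤ d := sub_nonneg.2 (hx i)
  have hs0 : 0 ≤ x i - xl i := sub_nonneg.2 (hxm.1 i)
  have hsd : x i - xl i ≤ d := by have := hxm.2 i; simp [hd]; linarith
  have hdnorm : d ≤ ‖xu - xl‖ := by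
    have := norm_le_pi_norm (xu - xl) i
    simp only [Pi.sub_apply, Real.norm_eq_abs] at this
    exact (le_abs_self _).trans this
  -- key: m*d/a ≤ x i - xl i ≤ (m+1)*d/a
  have key : ((m i : ℕ) : ℝ) * d / a ≤ x i - xl i ∧
      x i - xl i ≤ (((m i : ℕ) : ℝ) + 1) * d / a := by
    rcases eq_or_lt_of_le hd0 with hdz | hdz
    · have hs : x i - xl i = 0 := le_antisymm (by linarith) hs0
      simp [← hdz, hs]
    · set t := (x i - xl i) * a / d with ht
      have ht0 : 0 ≤ t := by positivity
      have hmval : (m i : ℕ) = min (a - 1) ⌊t⌋₊ := rfl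
      rcases le_or_gt ⌊t⌋₊ (a - 1) with hle | hlt
      · have hmf : (m i : ℕ) = ⌊t⌋₊ := by omega
        have h1 : ((m i : ℕ) : ℝ) ≤ t := by rw [hmf]; exact Nat.floor_le ht0
        have h2 : t < ((m i : ℕ) : ℝ) + 1 := by rw [hmf]; exact Nat.lt_floor_add_one t
        constructor
        · rw [div_le_iff₀ hapos]
          have h1' : ((m i : ℕ) : ℝ) * d ≤ (x i - xl i) * a := by
            have := mul_le_mul_of_nonneg_right h1 (le_of_lt hdz)
            rwa [ht, div_mul_cancel₀ _ (ne_of_gt hdz)] at this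
          linarith
        · rw [le_div_iff₀ hapos]
          have h2' : (x i - xl i) * a ≤ (((m i : ℕ) : ℝ) + 1) * d := by
            have := mul_le_mul_of_nonneg_right h2.le (le_of_lt hdz)
            rwa [ht, div_mul_cancel₀ _ (ne_of_gt hdz)] at this
          linarith
      · have hmf : (m i : ℕ) = a - 1 := by omega
        have hta : (a : ℝ) ≤ t := by
          calc (a : ℝ) ≤ (⌊t⌋₊ : ℝ) := by exact_mod_cast by omega
          _ ≤ t := Nat.floor_le ht0
        have hseq : x i - xl i = d := by
          have : d * a ≤ (x i - xl i) * a := by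
            have := (le_div_iff₀ hdz).1 hta
            nlinarith
          have := le_of_mul_le_mul_right this hapos
          linarith
        have hcast : ((m i : ℕ) : ℝ) = (a : ℝ) - 1 := by
          rw [hmf]; push_cast [Nat.cast_sub ha]; ring
        constructor
        · rw [hseq, hcast, div_le_iff₀ hapos]; nlinarith
        · rw [hseq, hcast, le_div_iff₀ hapos]; nlinarith
  set c : ℝ := ((m i : ℕ) : ℝ) with hc
  set u : ℝ := d / (2 * a) with hu
  have hane : (2 : ℝ) * a ≠ 0 := by positivity
  have e1 : c * d / a = 2 * c * u := by rw [hu]; field_simp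
  have e2 : (c + 1) * d / a = (2 * c + 2) * u := by rw [hu]; field_simp
  have e3 : (2 * c + 1) * d / (2 * a) = (2 * c + 1) * u := by rw [hu]; field_simp
  have hk1 := key.1
  have hk2 := key.2
  rw [e1] at hk1
  rw [e2] at hk2
  simp only [Pi.sub_apply, Real.norm_eq_abs]
  have : |x i - (xl i + (2 * c + 1) * d / (2 * a))| ≤ u := by
    rw [e3, abs_le]; constructor <;> linarith
  refine this.trans ?_
  rw [hu]; gcongr

lemma dispersion_grid_le {n : ℕ} {xl xu : Fin n → ℝ} (hx : xl ≤ xu) {a : ℕ} (ha : 1 ≤ a) :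
    dispersion xl xu (uniformGrid xl xu a) ≤ ‖xu - xl‖ / (2 * a) := by
  have hb : (0:ℝ) ≤ ‖xu - xl‖ / (2 * a) := by positivity
  apply Real.sSup_le _ hb
  rintro v ⟨x, hxm, rfl⟩
  obtain ⟨y, hy, hny⟩ := exists_grid_near hx ha hxm
  refine le_trans (csInf_le ?_ ⟨y, hy, rfl⟩) hny
  exact ⟨0, by rintro r ⟨z, _, rfl⟩; positivity⟩

lemma dispersion_grid_nonneg {n : ℕ} {xl xu : Fin n → ℝ} (hx : xl ≤ xu) {a : ℕ} (ha : 1 ≤ a) :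
    0 ≤ dispersion xl xu (uniformGrid xl xu a) := by
  have hne : xl ∈ Set.Icc xl xu := ⟨le_rfl, hx⟩
  refine le_trans ?_ (le_csSup ?_ (Set.mem_image_of_mem _ hne))
  · apply Real.sInf_nonneg
    rintro r ⟨z, _, rfl⟩; positivity
  · refine ⟨‖xu - xl‖ / (2 * a), ?_⟩
    rintro v ⟨x, hxm, rfl⟩
    obtain ⟨y, hy, hny⟩ := exists_grid_near hx ha hxm
    refine le_trans (csInf_le ?_ ⟨y, hy, rfl⟩) hny
    exact ⟨0, by rintro r ⟨z, _, rfl⟩; positivity⟩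

lemma dispersion_grid_tendsto {n : ℕ} {xl xu : Fin n → ℝ} (hx : xl ≤ xu) :
    Filter.Tendsto (fun a : ℕ => dispersion xl xu (uniformGrid xl xu a)) Filter.atTop (𝓝 0) := by
  have hub : Filter.Tendsto (fun a : ℕ => ‖xu - xl‖ / (2 * (a:ℝ))) Filter.atTop (𝓝 0) := by
    apply Tendsto.div_atTop tendsto_const_nhds
    exact (tendsto_natCast_atTop_atTop (R := ℝ)).const_mul_atTop (by norm_num)
  refine tendsto_of_tendsto_of_tendsto_of_le_of_le' tendsto_const_nhds hub ?_ ?_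
  · filter_upwards [Filter.eventually_ge_atTop 1] with a ha
    exact dispersion_grid_nonneg hx ha
  · filter_upwards [Filter.eventually_ge_atTop 1] with a ha
    exact dispersion_grid_le hx ha

lemma uniformGrid_nonempty {n : ℕ} (xl xu : Fin n → ℝ) {a : ℕ} (ha : 1 ≤ a) :
    (uniformGrid xl xu a).Nonempty := by
  haveI : Nonempty (Fin a) := Fin.pos_iff_nonempty.1 ha
  obtain ⟨m, hm⟩ : (Finset.univ : Finset (Fin n → Fin a)).Nonempty := Finset.univ_nonempty
  exact ⟨_, (@Finset.mem_image _ _ (Classical.decEq _) _ _ _).mpr ⟨m, hm, rfl⟩⟩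

lemma grid_sSup_tendsto {n : ℕ} {xl xu : Fin n → ℝ} (hx : xl ≤ xu)
    {f : (Fin n → ℝ) → ℝ} (hf : ContinuousOn f (Set.Icc xl xu)) :
    Filter.Tendsto (fun a : ℕ => sSup (f '' (uniformGrid xl xu a : Set (Fin n → ℝ))))
      Filter.atTop (𝓝 (sSup (f '' Set.Icc xl xu))) := by
  have hcomp : IsCompact (Set.Icc xl xu) := isCompact_Icc
  have hne : (Set.Icc xl xu).Nonempty := ⟨xl, le_rfl, hx⟩
  have hbdd : BddAbove (f '' Set.Icc xl xu) := (hcomp.image_of_continuousOn hf).bddAbove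
  have huc := hcomp.uniformContinuousOn_of_continuous hf
  rw [Metric.uniformContinuousOn_iff] at huc
  rw [Metric.tendsto_atTop]
  intro ε hε
  obtain ⟨δ, hδ, hδε⟩ := huc (ε / 2) (by linarith)
  obtain ⟨N, hN⟩ := exists_nat_gt (‖xu - xl‖ / (2 * δ))
  refine ⟨max (N + 1) 1, fun a haN => ?_⟩
  have ha1 : 1 ≤ a := le_trans (le_max_right _ _) haN
  have hapos : (0:ℝ) < a := by exact_mod_cast ha1
  have hsmall : ‖xu - xl‖ / (2 * a) < δ := by
    rw [div_lt_iff₀ (by positivity)]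
    have hNa : (N:ℝ) + 1 ≤ a := by exact_mod_cast le_trans (le_max_left _ _) haN
    rw [div_lt_iff₀ (by positivity)] at hN
    nlinarith
  have hgne : ((fun y => f y) '' (uniformGrid xl xu a : Set (Fin n → ℝ))).Nonempty :=
    (Set.Nonempty.image _ (uniformGrid_nonempty xl xu ha1))
  have hgbdd : BddAbove (f '' (uniformGrid xl xu a : Set (Fin n → ℝ))) :=
    ((uniformGrid xl xu a).finite_toSet.image f).bddAbove
  have hGL : sSup (f '' (uniformGrid xl xu a : Set (Fin n → ℝ))) ≤ sSup (f '' Set.Icc xl xu) := by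
    apply csSup_le hgne
    rintro v ⟨y, hy, rfl⟩
    exact le_csSup hbdd ⟨y, uniformGrid_subset hx a hy, rfl⟩
  have hLG : sSup (f '' Set.Icc xl xu) ≤
      sSup (f '' (uniformGrid xl xu a : Set (Fin n → ℝ))) + ε / 2 := by
    apply csSup_le (hne.image f)
    rintro v ⟨x, hxm, rfl⟩
    obtain ⟨y, hy, hny⟩ := exists_grid_near hx ha1 hxm
    have hdist : dist x y < δ := by rw [dist_eq_norm]; exact lt_of_le_of_lt hny hsmall
    have := hδε x hxm y (uniformGrid_subset hx a hy) hdist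
    rw [Real.dist_eq, abs_lt] at this
    have hyle : f y ≤ sSup (f '' (uniformGrid xl xu a : Set (Fin n → ℝ))) :=
      le_csSup hgbdd ⟨y, hy, rfl⟩
    linarith [this.1, this.2]
  rw [Real.dist_eq, abs_lt]
  constructor <;> linarith

lemma grid_sInf_tendsto {n : ℕ} {xl xu : Fin n → ℝ} (hx : xl ≤ xu)
    {f : (Fin n → ℝ) → ℝ} (hf : ContinuousOn f (Set.Icc xl xu)) :
    Filter.Tendsto (fun a : ℕ => sInf (f '' (uniformGrid xl xu a : Set (Fin n → ℝ))))
      Filter.atTop (𝓝 (sInf (f '' Set.Icc xl xu))) := by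
  have hcomp : IsCompact (Set.Icc xl xu) := isCompact_Icc
  have hne : (Set.Icc xl xu).Nonempty := ⟨xl, le_rfl, hx⟩
  have hbdd : BddBelow (f '' Set.Icc xl xu) := (hcomp.image_of_continuousOn hf).bddBelow
  have huc := hcomp.uniformContinuousOn_of_continuous hf
  rw [Metric.uniformContinuousOn_iff] at huc
  rw [Metric.tendsto_atTop]
  intro ε hε
  obtain ⟨δ, hδ, hδε⟩ := huc (ε / 2) (by linarith)
  obtain ⟨N, hN⟩ := exists_nat_gt (‖xu - xl‖ / (2 * δ))
  refine ⟨max (N + 1) 1, fun a haN => ?_⟩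
  have ha1 : 1 ≤ a := le_trans (le_max_right _ _) haN
  have hapos : (0:ℝ) < a := by exact_mod_cast ha1
  have hsmall : ‖xu - xl‖ / (2 * a) < δ := by
    rw [div_lt_iff₀ (by positivity)]
    have hNa : (N:ℝ) + 1 ≤ a := by exact_mod_cast le_trans (le_max_left _ _) haN
    rw [div_lt_iff₀ (by positivity)] at hN
    nlinarith
  have hgne : (f '' (uniformGrid xl xu a : Set (Fin n → ℝ))).Nonempty :=
    (Set.Nonempty.image _ (uniformGrid_nonempty xl xu ha1))
  have hgbdd : BddBelow (f '' (uniformGrid xl xu a : Set (Fin n → ℝ))) :=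
    ((uniformGrid xl xu a).finite_toSet.image f).bddBelow
  have hGL : sInf (f '' Set.Icc xl xu) ≤ sInf (f '' (uniformGrid xl xu a : Set (Fin n → ℝ))) := by
    apply le_csInf hgne
    rintro v ⟨y, hy, rfl⟩
    exact csInf_le hbdd ⟨y, uniformGrid_subset hx a hy, rfl⟩
  have hLG : sInf (f '' (uniformGrid xl xu a : Set (Fin n → ℝ))) ≤
      sInf (f '' Set.Icc xl xu) + ε / 2 := by
    rw [← sub_le_iff_le_add]
    apply le_csInf (hne.image f)
    rintro v ⟨x, hxm, rfl⟩
    obtain ⟨y, hy, hny⟩ := exists_grid_near hx ha1 hxm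
    have hdist : dist x y < δ := by rw [dist_eq_norm]; exact lt_of_le_of_lt hny hsmall
    have := hδε x hxm y (uniformGrid_subset hx a hy) hdist
    rw [Real.dist_eq, abs_lt] at this
    have hyle : sInf (f '' (uniformGrid xl xu a : Set (Fin n → ℝ))) ≤ f y :=
      csInf_le hgbdd ⟨y, hy, rfl⟩
    linarith [this.1, this.2]
  rw [Real.dist_eq, abs_lt]
  constructor <;> linarith

/-- **Arbitrary precision of the sampled sensitivity bounds** (Proposition 6).
Let `S : [x̲,x̄] → ℝ^{n×n}` be continuously differentiable on the box with differential
`DS(x)` (block convention: entry `(i,(j,k))` is `DS x i j (Pi.single k 1)`) satisfying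
`Sxx̲ ≤ DS(x) ≤ Sxx̄` entrywise on the box. For the uniform grid `Y_a` with `a` points per
dimension and `M^{(a)}_{ij} = Σ_k max(|Sxx̲|,|Sxx̄|)_{i,(j,k)} · d(Y_a)`, as `a → ∞`:
`max_{y∈Y_a} S_{ij}(y) + M^{(a)}_{ij} → sup_{x∈[x̲,x̄]} S_{ij}(x)` and
`min_{y∈Y_a} S_{ij}(y) − M^{(a)}_{ij} → inf_{x∈[x̲,x̄]} S_{ij}(x)`; i.e. the
over-approximating intervals of Theorem 5 converge to the unique tight interval
over-approximation of `{S(x) : x ∈ [x̲,x̄]}`. -/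
theorem sampled_sensitivity_bounds_arbitrary_precision {n : ℕ}
    (xl xu : Fin n → ℝ) (hx : xl ≤ xu)
    (S : (Fin n → ℝ) → Matrix (Fin n) (Fin n) ℝ)
    (DS : (Fin n → ℝ) → Fin n → Fin n → ((Fin n → ℝ) →L[ℝ] ℝ))
    (Sxxl Sxxu : Fin n → Fin n → Fin n → ℝ)
    (hDS : ∀ x ∈ Set.Icc xl xu, ∀ i j,
      HasFDerivWithinAt (fun z => S z i j) (DS x i j) (Set.Icc xl xu) x)
    (hDScont : ∀ i j, ContinuousOn (fun x => DS x i j) (Set.Icc xl xu))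
    (hbound : ∀ x ∈ Set.Icc xl xu, ∀ i j k,
      Sxxl i j k ≤ DS x i j (Pi.single k 1) ∧ DS x i j (Pi.single k 1) ≤ Sxxu i j k) :
    ∀ i j,
      Tendsto
        (fun a : ℕ =>
          sSup ((fun y => S y i j) '' (uniformGrid xl xu a : Set (Fin n → ℝ)))
            + ∑ k : Fin n,
                max |Sxxl i j k| |Sxxu i j k| * dispersion xl xu (uniformGrid xl xu a))
        atTop (𝓝 (sSup ((fun x => S x i j) '' Set.Icc xl xu))) ∧
      Tendsto
        (fun a : ℕ =>
          sInf ((fun y => S y i j) '' (uniformGrid xl xu a : Set (Fin n → ℝ)))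
            - ∑ k : Fin n,
                max |Sxxl i j k| |Sxxu i j k| * dispersion xl xu (uniformGrid xl xu a))
        atTop (𝓝 (sInf ((fun x => S x i j) '' Set.Icc xl xu))) := by
  intro i j
  have hf : ContinuousOn (fun x => S x i j) (Set.Icc xl xu) :=
    fun x hxm => (hDS x hxm i j).continuousWithinAt
  have hM : Tendsto
      (fun a : ℕ => ∑ k : Fin n,
        max |Sxxl i j k| |Sxxu i j k| * dispersion xl xu (uniformGrid xl xu a))
      atTop (𝓝 0) := by
    have h := (dispersion_grid_tendsto hx).const_mul (∑ k : Fin n, max |Sxxl i j k| |Sxxu i j k|)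
    rw [mul_zero] at h
    convert h using 2 with a
    rw [Finset.sum_mul]
  constructor
  · have := (grid_sSup_tendsto hx hf).add hM
    rwa [add_zero] at this
  · have := (grid_sInf_tendsto hx hf).sub hM
    rwa [sub_zero] at this
end

section
/- Taylor remainder bound for the integrated matrix exponential (underlying the interval term E(τ)): let A ∈ ℝ^{p×p}, τ ≥ 0, and r ∈ ℕ with ‖A‖_∞ τ < r + 2, where ‖·‖_∞ is the operator norm induced by the infinity vector norm. Then the integral ∫₀^τ exp(As) ds equals Σ_{i=0}^{∞} A^i τ^{i+1} / (i+1)!, and ‖∫₀^τ exp(As) ds − Σ_{i=0}^{r} A^i τ^{i+1} / (i+1)!‖_∞ ≤ τ · ((‖A‖_∞ τ)^{r+1} / (r+1)!) · (r+2) / (r + 2 − ‖A‖_∞ τ). Consequently, for any z₀ ∈ ℝ^{p×q} and B ∈ ℝ^{p×q}, the solution of ż(t) = A z(t) + B with z(0) = z₀ satisfies z(τ) = exp(Aτ) z₀ + (∫₀^τ exp(As) ds) B. -/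
/-! Termwise differentiation shows that `t ↦ ∑ tⁱ⁺¹/(i+1)! • aⁱ` is an antiderivative of
`t ↦ exp (t • a)` vanishing at `0`, in any Banach algebra. Past index `r` its terms are dominated
by a geometric series of ratio `‖a‖|t|/(r+2)`, since `(r+1)! (r+2)ʲ ≤ (r+1+j)!`; summing that series
gives the remainder bound. Finally `a * ∫₀ᵗ exp (s • a) ds = exp (t • a) - 1`, so
`exp (t • A) z₀ + (∫₀ᵗ exp (s • A) ds) B` solves `ż = A z + B`, and by uniqueness for Lipschitz
ODEs it is the solution. -/

-- Equip matrices with the operator norm induced by the vector infinity norm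
-- (the maximum absolute row sum), which is submultiplicative.
attribute [local instance]
  Matrix.linftyOpNormedAddCommGroup Matrix.linftyOpNormedRing
  Matrix.linftyOpNormedSpace Matrix.linftyOpNormedAlgebra

open scoped Nat

open Finset NormedSpace

theorem norm_sub_sum_range_le_of_geometric_tail {E : Type*} [NormedAddCommGroup E]
    {f : ℕ → E} {S : E} (hf : HasSum f S) (n : ℕ) {c ρ : ℝ} (hρ : ρ < 1)
    (h : ∀ j, ‖f (j + n)‖ ≤ c * ρ ^ j) :
    ‖S - ∑ i ∈ range n, f i‖ ≤ c / (1 - ρ) := by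
  have htail := (hasSum_nat_add_iff' n).mpr hf
  simpa [norm_sub_rev] using norm_sub_le_of_geometric_bound_of_hasSum hρ h htail 0

noncomputable def expIntegralTerm {R : Type*} [Monoid R] [SMul ℝ R] (a : R) (t : ℝ) (i : ℕ) :
    R :=
  (((i + 1)! : ℝ)⁻¹ * t ^ (i + 1)) • a ^ i

section ExpIntegral

variable {𝔸 : Type*} [NormedRing 𝔸] [NormedAlgebra ℝ 𝔸]

theorem hasDerivAt_expIntegralTerm (a : 𝔸) (i : ℕ) (t : ℝ) :
    HasDerivAt (fun s => expIntegralTerm a s i) ((i ! : ℝ)⁻¹ • (t • a) ^ i) t := by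
  have hcoeff : ((i + 1)! : ℝ)⁻¹ * ((i + 1 : ℕ) * t ^ i) = (i ! : ℝ)⁻¹ * t ^ i := by
    rw [Nat.factorial_succ, Nat.cast_mul]
    field_simp
  rw [smul_pow, smul_smul, ← hcoeff]
  exact (((hasDerivAt_pow (i + 1) t).const_mul _).smul_const (a ^ i))

theorem norm_expSeries_term_le_of_mem_Ioo (a : 𝔸) (i : ℕ) {s R : ℝ} (hs : s ∈ Set.Ioo (-R) R) :
    ‖(i ! : ℝ)⁻¹ • (s • a) ^ i‖ ≤ ‖(i ! : ℝ)⁻¹ • (R • a) ^ i‖ := by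
  simp only [smul_pow, smul_smul, norm_smul, norm_mul, norm_pow, Real.norm_eq_abs]
  gcongr ?_ * ?_ ^ i * _
  exact (abs_lt.mpr hs).le.trans (le_abs_self R)

-- `‖a ^ 0‖ = ‖1‖` need not be at most `1`.
theorem norm_expIntegralTerm_le (a : 𝔸) (t : ℝ) {i : ℕ} (hi : 0 < i) :
    ‖expIntegralTerm a t i‖ ≤ |t| * (‖a‖ * |t|) ^ i / (i + 1)! := by
  rw [expIntegralTerm, norm_smul, norm_mul, norm_inv, norm_pow, Real.norm_eq_abs,
    Real.norm_eq_abs, Nat.abs_cast]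
  calc ((i + 1)! : ℝ)⁻¹ * |t| ^ (i + 1) * ‖a ^ i‖
      ≤ ((i + 1)! : ℝ)⁻¹ * |t| ^ (i + 1) * ‖a‖ ^ i := by gcongr; exact norm_pow_le' a hi
    _ = |t| * (‖a‖ * |t|) ^ i / (i + 1)! := by ring

theorem norm_expIntegralTerm_add_le (a : 𝔸) (t : ℝ) (r j : ℕ) :
    ‖expIntegralTerm a t (j + (r + 1))‖
      ≤ |t| * ((‖a‖ * |t|) ^ (r + 1) / (r + 1)!) * (‖a‖ * |t| / (r + 2)) ^ j := by
  set x := ‖a‖ * |t|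
  have hfact : ((r + 1)! * (r + 2) ^ j : ℝ) ≤ (j + (r + 1) + 1)! := by
    have := (Nat.factorial_mul_pow_le_factorial (m := r + 1) (n := j)).trans
      (Nat.factorial_le (by omega : r + 1 + j ≤ j + (r + 1) + 1))
    exact_mod_cast this
  calc ‖expIntegralTerm a t (j + (r + 1))‖ ≤ |t| * x ^ (j + (r + 1)) / (j + (r + 1) + 1)! :=
        norm_expIntegralTerm_le a t (by omega)
    _ ≤ |t| * x ^ (j + (r + 1)) / ((r + 1)! * (r + 2) ^ j) := by gcongr
    _ = |t| * (x ^ (r + 1) / (r + 1)!) * (x / (r + 2)) ^ j := by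
        rw [div_pow]
        field_simp
        ring

variable [CompleteSpace 𝔸]

theorem summable_expIntegralTerm (a : 𝔸) (t : ℝ) : Summable (expIntegralTerm a t) :=
  summable_of_summable_hasDerivAt_of_isPreconnected (g := fun i s => expIntegralTerm a s i)
    (norm_expSeries_summable' (𝕂 := ℝ) ((|t| + 1) • a))
    isOpen_Ioo isPreconnected_Ioo (fun i s _ => hasDerivAt_expIntegralTerm a i s)
    (fun i _ => norm_expSeries_term_le_of_mem_Ioo a i) (y₀ := 0)
    ⟨by linarith [abs_nonneg t], by positivity⟩ (by simp [expIntegralTerm])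
    (abs_lt.mp (lt_add_one |t|))

theorem hasDerivAt_tsum_expIntegralTerm (a : 𝔸) (t : ℝ) :
    HasDerivAt (fun s => ∑' i, expIntegralTerm a s i) (exp (t • a)) t := by
  rw [exp_eq_tsum ℝ]
  exact hasDerivAt_tsum_of_isPreconnected (norm_expSeries_summable' (𝕂 := ℝ) ((|t| + 1) • a))
    isOpen_Ioo isPreconnected_Ioo (fun i s _ => hasDerivAt_expIntegralTerm a i s)
    (fun i _ => norm_expSeries_term_le_of_mem_Ioo a i) (y₀ := 0)
    ⟨by linarith [abs_nonneg t], by positivity⟩ (by simp [expIntegralTerm])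
    (abs_lt.mp (lt_add_one |t|))

theorem continuous_exp_smul (a : 𝔸) : Continuous fun s : ℝ => exp (s • a) :=
  continuous_iff_continuousAt.mpr fun s => (hasDerivAt_exp_smul_const' a s).continuousAt

theorem hasSum_expIntegralTerm (a : 𝔸) (t : ℝ) :
    HasSum (expIntegralTerm a t) (∫ s in (0 : ℝ)..t, exp (s • a)) := by
  rw [intervalIntegral.integral_eq_sub_of_hasDerivAt
    (fun s _ => hasDerivAt_tsum_expIntegralTerm a s)
    ((continuous_exp_smul a).intervalIntegrable 0 t)]
  simpa [expIntegralTerm] using (summable_expIntegralTerm a t).hasSum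

theorem norm_integral_exp_smul_sub_sum_le (a : 𝔸) (t : ℝ) (r : ℕ) (h : ‖a‖ * |t| < r + 2) :
    ‖(∫ s in (0 : ℝ)..t, exp (s • a)) - ∑ i ∈ range (r + 1), expIntegralTerm a t i‖
      ≤ |t| * ((‖a‖ * |t|) ^ (r + 1) / (r + 1)! * ((r + 2) / (r + 2 - ‖a‖ * |t|))) := by
  have hρ : ‖a‖ * |t| / (r + 2) < 1 := (div_lt_one (by positivity)).mpr h
  refine (norm_sub_sum_range_le_of_geometric_tail (hasSum_expIntegralTerm a t) (r + 1) hρ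
    (norm_expIntegralTerm_add_le a t r)).trans_eq ?_
  have : (r + 2 - ‖a‖ * |t|) ≠ 0 := by linarith
  field_simp

theorem mul_integral_exp_smul (a : 𝔸) (t : ℝ) :
    a * ∫ s in (0 : ℝ)..t, exp (s • a) = exp (t • a) - 1 := by
  have hcomm := (ContinuousLinearMap.mul ℝ 𝔸 a).intervalIntegral_comp_comm
    ((continuous_exp_smul a).intervalIntegrable (μ := MeasureTheory.volume) 0 t)
  simp only [ContinuousLinearMap.mul_apply'] at hcomm
  rw [← hcomm, intervalIntegral.integral_eq_sub_of_hasDerivAt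
    (fun s _ => hasDerivAt_exp_smul_const' a s)
    ((continuous_const.mul (continuous_exp_smul a)).intervalIntegrable 0 t), zero_smul, exp_zero]

end ExpIntegral

section MatrixODE

variable {l m n : Type*} [Fintype l] [Fintype m] [Fintype n]

theorem HasDerivAt.matrix_mul_const {f : ℝ → Matrix l m ℝ} {f' : Matrix l m ℝ} {t : ℝ}
    (hf : HasDerivAt f f' t) (C : Matrix m n ℝ) :
    HasDerivAt (fun s => f s * C) (f' * C) t :=
  (mulRightLinearMap l ℝ C).toContinuousLinearMap.hasFDerivAt.comp_hasDerivAt t hf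

theorem Matrix.lipschitzWith_mul_add (A : Matrix l m ℝ) (B : Matrix l n ℝ) :
    LipschitzWith ‖A‖₊ fun M : Matrix m n ℝ => A * M + B :=
  LipschitzWith.of_dist_le_mul fun M₁ M₂ => by
    simpa only [dist_eq_norm, add_sub_add_right_eq_sub, ← Matrix.mul_sub, coe_nnnorm]
      using Matrix.linfty_opNorm_mul A (M₁ - M₂)

theorem Matrix.eq_exp_smul_mul_add_integral_mul_of_hasDerivAt [DecidableEq m] (A : Matrix m m ℝ)
    (B : Matrix m n ℝ) {z : ℝ → Matrix m n ℝ} (hz : ∀ t, HasDerivAt z (A * z t + B) t)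
    {τ : ℝ} (hτ : 0 ≤ τ) :
    z τ = exp (τ • A) * z 0 + (∫ s in (0 : ℝ)..τ, exp (s • A)) * B := by
  set y : ℝ → Matrix m n ℝ := fun t => exp (t • A) * z 0 + (∫ s in (0 : ℝ)..t, exp (s • A)) * B
  have hy : ∀ t, HasDerivAt y (A * y t + B) t := fun t => by
    have hexp := (hasDerivAt_exp_smul_const' A t).matrix_mul_const (z 0)
    have hint :=
      ((continuous_exp_smul A).integral_hasStrictDerivAt 0 t).hasDerivAt.matrix_mul_const B
    have hA : A * ∫ s in (0 : ℝ)..t, exp (s • A) = exp (t • A) - 1 := mul_integral_exp_smul A t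
    refine (hexp.add hint).congr_deriv ?_
    simp only [y, Matrix.mul_add, ← Matrix.mul_assoc, hA, Matrix.sub_mul, Matrix.one_mul]
    abel
  have hzy := ODE_solution_unique (a := 0) (b := τ) (v := fun _ M => A * M + B)
    (fun _ => Matrix.lipschitzWith_mul_add A B)
    (fun t _ => (hz t).continuousAt.continuousWithinAt) (fun t _ => (hz t).hasDerivWithinAt)
    (fun t _ => (hy t).continuousAt.continuousWithinAt) (fun t _ => (hy t).hasDerivWithinAt)
    (by simp [y])
  exact hzy (Set.right_mem_Icc.mpr hτ)

end MatrixODE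

/-- **Taylor remainder bound for the integrated matrix exponential** (underlying the
interval term `E(τ)` of Lemma 4): for `A ∈ ℝ^{p×p}`, `τ ≥ 0` and `r ∈ ℕ` with
`‖A‖_∞ τ < r + 2` (max absolute row sum operator norm):
the integral `∫₀^τ exp(As) ds` equals the series `Σ_{i=0}^∞ A^i τ^{i+1}/(i+1)!`, the
truncation error satisfies
`‖∫₀^τ exp(As) ds − Σ_{i=0}^r A^i τ^{i+1}/(i+1)!‖_∞
  ≤ τ · ((‖A‖_∞ τ)^{r+1}/(r+1)!) · (r+2)/(r+2−‖A‖_∞ τ)`,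
and for any `z₀, B ∈ ℝ^{p×q}` the solution of `ż = Az + B`, `z(0) = z₀` is
`z(τ) = exp(Aτ) z₀ + (∫₀^τ exp(As) ds) B`. -/
theorem matrix_exp_integral_taylor_remainder_bound {p q : ℕ}
    (A : Matrix (Fin p) (Fin p) ℝ) (τ : ℝ) (hτ : 0 ≤ τ) (r : ℕ)
    (h : ‖A‖ * τ < r + 2) :
    (∫ s in (0:ℝ)..τ, NormedSpace.exp (s • A))
        = ∑' i : ℕ, (((i + 1)! : ℝ)⁻¹ * τ ^ (i + 1)) • A ^ i ∧
    ‖(∫ s in (0:ℝ)..τ, NormedSpace.exp (s • A))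
        - ∑ i ∈ Finset.range (r + 1), (((i + 1)! : ℝ)⁻¹ * τ ^ (i + 1)) • A ^ i‖
      ≤ τ * ((‖A‖ * τ) ^ (r + 1) / (r + 1)! * ((r + 2) / (r + 2 - ‖A‖ * τ))) ∧
    ∀ (z₀ B : Matrix (Fin p) (Fin q) ℝ) (z : ℝ → Matrix (Fin p) (Fin q) ℝ),
      (∀ t, HasDerivAt z (A * z t + B) t) → z 0 = z₀ →
      z τ = NormedSpace.exp (τ • A) * z₀ + (∫ s in (0:ℝ)..τ, NormedSpace.exp (s • A)) * B := by
  refine ⟨(hasSum_expIntegralTerm A τ).tsum_eq.symm, ?_, ?_⟩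
  · have hbound := norm_integral_exp_smul_sub_sum_le A τ r (by rwa [abs_of_nonneg hτ])
    rwa [abs_of_nonneg hτ] at hbound
  · rintro z₀ B z hz rfl
    exact Matrix.eq_exp_smul_mul_add_integral_mul_of_hasDerivAt A B hz hτ
end
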